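/- Let A be an n×n complex matrix and Δ ∈ [0,1]^n be such that Δ_i > 0 only if A has a zero cross at position i. Suppose that for some k and some M with M ≤ n − k + 1, there exists i ∈ {k,…,k+M−1} with Δ_i = 1. Set V = u_{(k, k+1)}(Δ_{k+1}) ⋯ u_{(k, k+M−1)}(Δ_{k+M−1}). Then V A V* has a zero cross at position k. -/

import Mathlib

open Matrix

/-- `A` has a zero cross at position `k`: row `k` and column `k` vanish. -/
def HasZeroCross {n : ℕ} (A : Matrix (Fin n) (Fin n) ℂ) (k : Fin n) : Prop :=
  (∀ j, A k j = 0) ∧ (∀ i, A i k = 0)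

/-!
Row `k` of `V = u(k,b₁)(Δ b₁) ⋯ u(k,bₘ)(Δ bₘ)` stays supported on `{k} ∪ {bⱼ : Δ bⱼ > 0}`:
each factor only mixes the entries at `k` and `bⱼ`, and the entry at `bⱼ` is zero before that
factor acts and becomes nonzero only when `u(k,bⱼ)(Δ bⱼ) ≠ 1`. Once a factor with `Δ bⱼ = 1`,
i.e. a transposition, has acted, the entry at `k` is zero and stays zero. So row `k` of `V` is
supported on zero crosses of `A` (when the window hits `Δ k = 1` instead, `k` itself is a zero
cross), and then row and column `k` of `V A Vᴴ` vanish.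
-/

section TwoLevel

variable {ι R : Type*} [Fintype ι] [DecidableEq ι] [Semiring R]

def IsTwoLevel (U : Matrix ι ι R) (a b : ι) : Prop :=
  ∀ i j, (i ≠ a ∧ i ≠ b) ∨ (j ≠ a ∧ j ≠ b) → U i j = if i = j then 1 else 0

namespace IsTwoLevel

variable {U W : Matrix ι ι R} {a b : ι}

theorem mul_apply_of_ne (hU : IsTwoLevel U a b) (i : ι) {p : ι} (hpa : p ≠ a) (hpb : p ≠ b) :
    (W * U) i p = W i p := by
  rw [mul_apply, Finset.sum_eq_single p]
  · rw [hU p p (Or.inr ⟨hpa, hpb⟩), if_pos rfl, mul_one]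
  · intro q _ hqp
    rw [hU q p (Or.inr ⟨hpa, hpb⟩), if_neg hqp, mul_zero]
  · simp

theorem mul_apply_of_apply_eq_zero (hU : IsTwoLevel U a b) {i : ι} (hWb : W i b = 0) {p : ι}
    (hp : p = a ∨ p = b) : (W * U) i p = W i a * U a p := by
  rw [mul_apply, Finset.sum_eq_single a]
  · intro q _ hqa
    by_cases hqb : q = b
    · rw [hqb, hWb, zero_mul]
    · have hqp : q ≠ p := by rintro rfl; tauto
      rw [hU q p (Or.inl ⟨hqa, hqb⟩), if_neg hqp, mul_zero]
  · simp

end IsTwoLevel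

variable {U : ι → Matrix ι ι R} {k : ι}

theorem list_prod_map_apply_ne_zero (hU : ∀ b, b ≠ k → IsTwoLevel (U b) k b) {bs : List ι}
    (hnd : bs.Nodup) (hk : k ∉ bs) {p : ι} (hp : (bs.map U).prod k p ≠ 0) :
    p = k ∨ p ∈ bs ∧ U p k p ≠ 0 := by
  induction bs using List.reverseRecOn generalizing p with
  | nil => exact .inl (by_contra fun hpk => hp (one_apply_ne' hpk))
  | append_singleton l b ih =>
    rw [← List.concat_eq_append, List.nodup_concat] at hnd
    obtain ⟨hbl, hnd⟩ := hnd
    have hkl : k ∉ l := fun h => hk (List.mem_append_left _ h)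
    have hbk : b ≠ k := fun h => hk (h ▸ List.mem_append_right _ (List.mem_singleton_self b))
    have hWb : (l.map U).prod k b = 0 := by
      by_contra h
      rcases ih hnd hkl h with h | ⟨h, -⟩
      exacts [hbk h, hbl h]
    rw [List.map_append, List.prod_append, List.map_singleton, List.prod_singleton] at hp
    by_cases hpk : p = k
    · exact .inl hpk
    by_cases hpb : p = b
    · subst hpb
      rw [(hU p hbk).mul_apply_of_apply_eq_zero hWb (.inr rfl)] at hp
      exact .inr ⟨List.mem_append_right _ (List.mem_singleton_self p), right_ne_zero_of_mul hp⟩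
    rw [(hU b hbk).mul_apply_of_ne k hpk hpb] at hp
    rcases ih hnd hkl hp with h | ⟨hpl, hUp⟩
    exacts [.inl h, .inr ⟨List.mem_append_left _ hpl, hUp⟩]

theorem list_prod_map_apply_self_eq_zero_of_mem (hU : ∀ b, b ≠ k → IsTwoLevel (U b) k b)
    {bs : List ι} (hnd : bs.Nodup) (hk : k ∉ bs) {b : ι} (hb : b ∈ bs) (hUb : U b k k = 0) :
    (bs.map U).prod k k = 0 := by
  induction bs using List.reverseRecOn with
  | nil => simp at hb
  | append_singleton l c ih =>
    have hnd' := hnd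
    rw [← List.concat_eq_append, List.nodup_concat] at hnd'
    obtain ⟨hcl, hndl⟩ := hnd'
    have hkl : k ∉ l := fun h => hk (List.mem_append_left _ h)
    have hck : c ≠ k := fun h => hk (h ▸ List.mem_append_right _ (List.mem_singleton_self c))
    have hWc : (l.map U).prod k c = 0 := by
      by_contra h
      rcases list_prod_map_apply_ne_zero hU hndl hkl h with h | ⟨h, -⟩
      exacts [hck h, hcl h]
    rw [List.map_append, List.prod_append, List.map_singleton, List.prod_singleton,
      (hU c hck).mul_apply_of_apply_eq_zero hWc (.inl rfl)]
    rcases List.mem_append.mp hb with hbl | hbc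
    · rw [ih hndl hkl hbl, zero_mul]
    · rw [List.mem_singleton.mp hbc] at hUb
      rw [hUb, mul_zero]

end TwoLevel

theorem hasZeroCross_mul_mul_conjTranspose {n : ℕ} {A V : Matrix (Fin n) (Fin n) ℂ} {k : Fin n}
    (hV : ∀ p, V k p ≠ 0 → HasZeroCross A p) : HasZeroCross (V * A * Vᴴ) k := by
  constructor
  · intro j
    rw [mul_assoc, mul_apply]
    refine Finset.sum_eq_zero fun p _ => ?_
    by_cases h : V k p = 0
    · rw [h, zero_mul]
    · rw [mul_apply, Finset.sum_eq_zero fun q _ => by rw [(hV p h).1 q, zero_mul], mul_zero]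
  · intro i
    rw [mul_apply]
    refine Finset.sum_eq_zero fun q _ => ?_
    by_cases h : V k q = 0
    · rw [conjTranspose_apply, h, star_zero, mul_zero]
    · rw [mul_apply, Finset.sum_eq_zero fun p _ => by rw [(hV q h).2 p, mul_zero], zero_mul]

/-- Let `A` be an `n×n` complex matrix and `Δ ∈ [0,1]^n` with `Δ i > 0` only
if `A` has a zero cross at position `i`.  Suppose for some position `k` and some `M` with
`k + M ≤ n` (i.e. the window `{k, …, k+M-1}` fits, `M ≤ n - k + 1` in 1-based indexing)
there is `i ∈ {k, …, k+M-1}` with `Δ i = 1`.  Set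
`V = u (k, k+1) (Δ (k+1)) ⋯ u (k, k+M-1) (Δ (k+M-1))`.
Then `V ⬝ A ⬝ Vᴴ` has a zero cross at position `k`. -/
theorem zero_cross_block_one {n : ℕ}
    (u : Fin n → Fin n → ℝ → Matrix (Fin n) (Fin n) ℂ)
    (hu_zero : ∀ a b : Fin n, a ≠ b → u a b 0 = 1)
    (hu_one : ∀ a b : Fin n, a ≠ b → u a b 1 = (Equiv.swap a b).permMatrix ℂ)
    (hu_delta : ∀ a b : Fin n, a ≠ b → ∀ t ∈ Set.Icc (0 : ℝ) 1, ∀ i j : Fin n,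
      ((i ≠ a ∧ i ≠ b) ∨ (j ≠ a ∧ j ≠ b)) → u a b t i j = if i = j then 1 else 0)
    (A : Matrix (Fin n) (Fin n) ℂ)
    (Δ : Fin n → ℝ) (hΔ01 : ∀ i, Δ i ∈ Set.Icc (0 : ℝ) 1)
    (hΔcross : ∀ i, 0 < Δ i → HasZeroCross A i)
    (k : Fin n) (M : ℕ) (hkM : (k : ℕ) + M ≤ n)
    (hex : ∃ i : Fin n, (k : ℕ) ≤ (i : ℕ) ∧ (i : ℕ) < (k : ℕ) + M ∧ Δ i = 1)
    (V : Matrix (Fin n) (Fin n) ℂ)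
    (hV : V = (List.ofFn fun a : Fin (M - 1) =>
      u k ⟨(k : ℕ) + 1 + (a : ℕ), by have := a.isLt; omega⟩
        (Δ ⟨(k : ℕ) + 1 + (a : ℕ), by have := a.isLt; omega⟩)).prod) :
    HasZeroCross (V * A * Vᴴ) k := by
  set bs := List.ofFn fun a : Fin (M - 1) =>
    (⟨(k : ℕ) + 1 + (a : ℕ), by have := a.isLt; omega⟩ : Fin n)
  have hV' : V = (bs.map fun b => u k b (Δ b)).prod := by rw [hV, List.map_ofFn]; rfl
  have hnd : bs.Nodup := List.nodup_ofFn.mpr fun a a' h => Fin.ext (by simpa using h)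
  have hk : k ∉ bs := by simp [bs, Fin.ext_iff]; omega
  have hU : ∀ b, b ≠ k → IsTwoLevel (u k b (Δ b)) k b :=
    fun b hbk => hu_delta k b hbk.symm (Δ b) (hΔ01 b)
  refine hasZeroCross_mul_mul_conjTranspose fun p hp => ?_
  rw [hV'] at hp
  rcases list_prod_map_apply_ne_zero hU hnd hk hp with rfl | ⟨hpbs, hup⟩
  · obtain ⟨i, hpi, hi, hΔi⟩ := hex
    rcases hpi.eq_or_lt with hip | hpi
    · exact hΔcross p (by rw [Fin.ext hip, hΔi]; exact one_pos)
    have hibs : i ∈ bs := List.mem_ofFn.mpr ⟨⟨i - p - 1, by omega⟩, Fin.ext (by simp; omega)⟩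
    have hpi' : p ≠ i := fun h => hk (h ▸ hibs)
    refine absurd (list_prod_map_apply_self_eq_zero_of_mem hU hnd hk hibs ?_) hp
    simp [hΔi, hu_one p i hpi', hpi'.symm]
  · have hkp : k ≠ p := fun h => hk (h ▸ hpbs)
    refine hΔcross p ((hΔ01 p).1.lt_of_ne fun h => hup ?_)
    rw [← h, hu_zero k p hkp, one_apply_ne hkp]
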